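/- arXiv:1111.5386 — 2 statements merged into one kernel-verified Lean document; each statement's English description precedes it below -/
import Mathlib

section
/- Let σ be a sequence of length n and 0 < ε' < 1/4 a real number. Suppose R' is a set of indices such that (a) every index j with ∃ k < j satisfying |[k,j) ∩ inv(j)| > (1/2 + 2ε')(j - k) belongs to R', and (b) every j ∈ R' satisfies ∃ k < j with |[k,j) ∩ inv(j)| > (j-k)/2. Then (1/2 - 2ε') · ed(σ) ≤ |R'| ≤ 2 · ed(σ). -/
/-- A sequence is non-decreasing on an index set `S`. -/
def MonoOn {n : ℕ} {α : Type*} [Preorder α] (σ : Fin n → α) (S : Finset (Fin n)) : Prop :=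
  ∀ i ∈ S, ∀ j ∈ S, i ≤ j → σ i ≤ σ j

/-- Length of the longest non-decreasing subsequence. -/
noncomputable def lisLen {n : ℕ} {α : Type*} [Preorder α] (σ : Fin n → α) : ℕ :=
  sSup {k | ∃ S : Finset (Fin n), S.card = k ∧ MonoOn σ S}

/-- Edit distance to monotonicity: minimum number of deletions leaving a
non-decreasing subsequence. -/
noncomputable def edDist {n : ℕ} {α : Type*} [Preorder α] (σ : Fin n → α) : ℕ :=
  sInf {k | ∃ S : Finset (Fin n), S.card = k ∧ MonoOn σ Sᶜ}

/-!
Lower bound: call an index good if it is not in `R'`. The good indices that no later good index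
undercuts form a non-decreasing subsequence `K`. Every other good index `x` is undercut by an
element of `K`, hence (as `K` is monotone) by the first element `y` of `K` after `x`; so inside the
`K`-free gap `[k, y)` in front of each `y ∈ K`, every good index is an inversion of `y`, and since
`y` is good these are at most a `δ = 1/2 + 2ε'` fraction of the gap. Summing over the gaps, the good
indices outside `K` number at most `δ · |Kᶜ|`, whence `(1 - δ) · ed(σ) ≤ (1 - δ) · |Kᶜ| ≤ |R'|`.

Upper bound: fix an optimal deletion set `S`. For `j ∈ R' \ S` all inversions of `j` lie in `S`,
so `S` fills more than half of some window ending at `j`. A ballot-type count (the running surplus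
of `S` over its complement, clipped at `0`, is positive at every such `j`, and each such `j` uses up
one unit of surplus) shows there are at most `|S|` of them.
-/

open Finset

/-- `runExcess s m = max_{k ≤ m} (#(s ∩ [k, m)) - #([k, m) \ s))`. -/
def runExcess (s : Finset ℕ) : ℕ → ℕ
  | 0 => 0
  | m + 1 => if m ∈ s then runExcess s m + 1 else runExcess s m - 1

theorem runExcess_add_card_filter (s : Finset ℕ) (N : ℕ) :
    runExcess s N + #{m ∈ range N | m ∉ s ∧ 0 < runExcess s m} = #{m ∈ range N | m ∈ s} := by
  induction N with
  | zero => rfl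
  | succ N ih =>
    simp only [range_add_one, filter_insert, runExcess]
    split_ifs <;> simp_all <;> omega

theorem le_runExcess (s : Finset ℕ) {k j : ℕ} (hkj : k ≤ j) :
    2 * (#{m ∈ Ico k j | m ∈ s} : ℤ) - (j - k) ≤ runExcess s j := by
  induction j, hkj using Nat.le_induction with
  | base => simp
  | succ j hkj ih =>
    rw [Nat.Ico_succ_right_eq_insert_Ico hkj, filter_insert]
    simp only [runExcess]
    split_ifs <;> simp_all <;> omega

theorem runExcess_pos {s : Finset ℕ} {k j : ℕ} (hkj : k ≤ j)
    (h : j - k < 2 * #{m ∈ Ico k j | m ∈ s}) : 0 < runExcess s j := by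
  have := le_runExcess s hkj
  omega

section

variable {α : Type*} {n : ℕ}

theorem edDist_le_card [Preorder α] {σ : Fin n → α} {S : Finset (Fin n)} (hS : MonoOn σ Sᶜ) :
    edDist σ ≤ #S :=
  Nat.sInf_le ⟨S, rfl, hS⟩

theorem exists_card_eq_edDist [Preorder α] (σ : Fin n → α) :
    ∃ S : Finset (Fin n), #S = edDist σ ∧ MonoOn σ Sᶜ :=
  Nat.sInf_mem (s := {k | ∃ S : Finset (Fin n), #S = k ∧ MonoOn σ Sᶜ})
    ⟨_, univ, rfl, fun i hi => by simp at hi⟩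

variable [LinearOrder α]

def invCount (σ : Fin n → α) (k j : Fin n) : ℕ :=
  #{i ∈ Ico k j | σ j < σ i}

theorem card_le_two_mul_card_of_monoOn_compl {σ : Fin n → α} {R S : Finset (Fin n)}
    (hS : MonoOn σ Sᶜ) (hR : ∀ j ∈ R, ∃ k : Fin n, k < j ∧ (j : ℕ) - k < 2 * invCount σ k j) :
    #R ≤ 2 * #S := by
  set s := S.map Fin.valEmbedding
  have hmem (i : Fin n) : (i : ℕ) ∈ s ↔ i ∈ S := mem_map' Fin.valEmbedding
  have hexcess : ∀ j ∈ R \ S, 0 < runExcess s j := by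
    intro j hj
    obtain ⟨hjR, hjS⟩ := mem_sdiff.1 hj
    obtain ⟨k, hkj, hk⟩ := hR j hjR
    refine runExcess_pos hkj.le (hk.trans_le (Nat.mul_le_mul_left 2 ?_))
    refine card_le_card_of_injOn Fin.val (fun i hi => ?_) Fin.val_injective.injOn
    obtain ⟨hi, hσ⟩ := mem_filter.1 hi
    have hiS : i ∈ S := by
      by_contra hiS
      exact (hS i (mem_compl.2 hiS) j (mem_compl.2 hjS) (mem_Ico.1 hi).2.le).not_gt hσ
    simp only [coe_filter, Set.mem_ofPred_eq, mem_Ico, hmem, hiS, and_true]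
    exact ⟨(mem_Ico.1 hi).1, (mem_Ico.1 hi).2⟩
  have hsdiff : #(R \ S) ≤ #S := calc
    #(R \ S) ≤ #{m ∈ range n | m ∉ s ∧ 0 < runExcess s m} := by
      refine card_le_card_of_injOn Fin.val (fun j hj => ?_) Fin.val_injective.injOn
      simp only [coe_filter, Set.mem_ofPred_eq, mem_range, hmem, j.isLt, hexcess j hj,
        (mem_sdiff.1 hj).2, not_false_eq_true, and_self]
    _ ≤ #{m ∈ range n | m ∈ s} := by
      have := runExcess_add_card_filter s n
      omega
    _ ≤ #S := (card_le_card fun m hm => (mem_filter.1 hm).2).trans (card_map _).le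
  calc #R = #(R ∩ S) + #(R \ S) := (card_inter_add_card_sdiff R S).symm
    _ ≤ #S + #S := add_le_add (card_le_card inter_subset_right) hsdiff
    _ = 2 * #S := (two_mul _).symm

def survivors (σ : Fin n → α) (R : Finset (Fin n)) : Finset (Fin n) :=
  {j | j ∉ R ∧ ∀ i, j < i → i ∉ R → σ j ≤ σ i}

theorem monoOn_survivors (σ : Fin n → α) (R : Finset (Fin n)) : MonoOn σ (survivors σ R) := by
  intro i hi j hj hij
  rcases hij.lt_or_eq with hij | rfl
  · exact (mem_filter.1 hi).2.2 j hij (mem_filter.1 hj).2.1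
  · exact le_rfl

theorem exists_survivor_lt {σ : Fin n → α} {R : Finset (Fin n)} {x : Fin n} (hxR : x ∉ R)
    (hx : x ∉ survivors σ R) : ∃ z ∈ survivors σ R, x < z ∧ σ z < σ x := by
  set T : Finset (Fin n) := {i | x < i ∧ i ∉ R ∧ σ i < σ x}
  have hT : T.Nonempty := by
    simp only [survivors, mem_filter, mem_univ, true_and, hxR, not_false_eq_true,
      not_forall, not_le] at hx
    obtain ⟨i, hxi, hiR, hσ⟩ := hx
    exact ⟨i, mem_filter.2 ⟨mem_univ _, hxi, hiR, hσ⟩⟩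
  obtain ⟨z, hzT, hzmin⟩ := T.exists_min_image σ hT
  obtain ⟨hxz, hzR, hσz⟩ := (mem_filter.1 hzT).2
  refine ⟨z, mem_filter.2 ⟨mem_univ _, hzR, fun i hzi hiR => ?_⟩, hxz, hσz⟩
  by_contra! hσi
  exact (hzmin i (mem_filter.2 ⟨mem_univ _, hxz.trans hzi, hiR, hσi.trans hσz⟩)).not_gt hσi

def gapBefore (K : Finset (Fin n)) (y : Fin n) : Finset (Fin n) :=
  {x | x < y ∧ ∀ z ∈ K, x ≤ z → y ≤ z}

theorem exists_gapBefore_eq_Ico (K : Finset (Fin n)) (y : Fin n) :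
    ∃ k, gapBefore K y = Ico k y := by
  by_cases hne : (gapBefore K y).Nonempty
  · refine ⟨(gapBefore K y).min' hne, Finset.ext fun x => ?_⟩
    have hmin := (mem_filter.1 ((gapBefore K y).min'_mem hne)).2.2
    constructor
    · intro hx
      exact mem_Ico.2 ⟨min'_le _ x hx, (mem_filter.1 hx).2.1⟩
    · intro hx
      obtain ⟨hkx, hxy⟩ := mem_Ico.1 hx
      exact mem_filter.2 ⟨mem_univ _, hxy, fun z hz hxz => hmin z hz (hkx.trans hxz)⟩
  · exact ⟨y, by simpa [not_nonempty_iff_eq_empty] using hne⟩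

theorem pairwiseDisjoint_gapBefore (K : Finset (Fin n)) :
    (K : Set (Fin n)).PairwiseDisjoint (gapBefore K) := by
  intro y hy y' hy' hne
  refine disjoint_left.2 fun x hx hx' => hne (le_antisymm ?_ ?_)
  · exact (mem_filter.1 hx).2.2 y' hy' ((mem_filter.1 hx').2.1.le)
  · exact (mem_filter.1 hx').2.2 y hy ((mem_filter.1 hx).2.1.le)

theorem disjoint_gapBefore (K : Finset (Fin n)) (y : Fin n) : Disjoint K (gapBefore K y) :=
  disjoint_left.2 fun x hxK hx => (mem_filter.1 hx).2.1.not_ge ((mem_filter.1 hx).2.2 x hxK le_rfl)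

theorem exists_mem_gapBefore {K : Finset (Fin n)} {x z : Fin n} (hx : x ∉ K) (hz : z ∈ K)
    (hxz : x < z) : ∃ y ∈ K, x ∈ gapBefore K y := by
  have hne : ({w ∈ K | x < w} : Finset (Fin n)).Nonempty := ⟨z, mem_filter.2 ⟨hz, hxz⟩⟩
  obtain ⟨hyK, hxy⟩ := mem_filter.1 (min'_mem _ hne)
  refine ⟨_, hyK, mem_filter.2 ⟨mem_univ _, hxy, fun w hw hxw => min'_le _ w ?_⟩⟩
  exact mem_filter.2 ⟨hw, hxw.lt_of_ne (ne_of_mem_of_not_mem hw hx).symm⟩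

theorem card_compl_survivors_sdiff_le {σ : Fin n → α} {R : Finset (Fin n)} {δ : ℝ} (hδ : 0 ≤ δ)
    (hR : ∀ j, (∃ k : Fin n, k < j ∧ δ * (((j : ℕ) : ℝ) - ((k : ℕ) : ℝ)) < invCount σ k j) →
      j ∈ R) :
    (#((survivors σ R)ᶜ \ R) : ℝ) ≤ δ * #(survivors σ R)ᶜ := by
  set K := survivors σ R
  set C := Kᶜ \ R
  have hcover : C ⊆ K.biUnion fun y => C ∩ gapBefore K y := by
    intro x hx
    obtain ⟨hxK, hxR⟩ := mem_sdiff.1 hx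
    obtain ⟨z, hzK, hxz, -⟩ := exists_survivor_lt hxR (mem_compl.1 hxK)
    obtain ⟨y, hyK, hxy⟩ := exists_mem_gapBefore (mem_compl.1 hxK) hzK hxz
    exact mem_biUnion.2 ⟨y, hyK, mem_inter.2 ⟨hx, hxy⟩⟩
  have hgap : ∀ y ∈ K, (#(C ∩ gapBefore K y) : ℝ) ≤ δ * #(gapBefore K y) := by
    intro y hyK
    obtain ⟨k, hk⟩ := exists_gapBefore_eq_Ico K y
    have hinv : #(C ∩ gapBefore K y) ≤ invCount σ k y := by
      refine card_le_card fun x hx => ?_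
      obtain ⟨hxC, hxy⟩ := mem_inter.1 hx
      obtain ⟨hxK, hxR⟩ := mem_sdiff.1 hxC
      obtain ⟨z, hzK, hxz, hσz⟩ := exists_survivor_lt hxR (mem_compl.1 hxK)
      have hyz : y ≤ z := (mem_filter.1 hxy).2.2 z hzK hxz.le
      exact mem_filter.2 ⟨hk ▸ hxy, (monoOn_survivors σ R y hyK z hzK hyz).trans_lt hσz⟩
    rw [hk] at hinv ⊢
    rcases lt_or_ge k y with hky | hyk
    · have hy := not_lt.1 fun h => (mem_filter.1 hyK).2.1 (hR y ⟨k, hky, h⟩)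
      rw [Fin.card_Ico, Nat.cast_sub (Fin.le_def.1 hky.le)]
      exact (Nat.cast_le.2 hinv).trans hy
    · simp [Ico_eq_empty_of_le hyk]
  calc (#C : ℝ) ≤ ∑ y ∈ K, (#(C ∩ gapBefore K y) : ℝ) := by
        exact_mod_cast (card_le_card hcover).trans card_biUnion_le
    _ ≤ ∑ y ∈ K, δ * #(gapBefore K y) := sum_le_sum hgap
    _ = δ * #(K.biUnion (gapBefore K)) := by
        rw [card_biUnion (pairwiseDisjoint_gapBefore K), ← mul_sum, Nat.cast_sum]
    _ ≤ δ * #Kᶜ := by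
        refine mul_le_mul_of_nonneg_left (Nat.cast_le.2 (card_le_card ?_)) hδ
        exact biUnion_subset.2 fun y _ =>
          subset_compl_iff_disjoint_left.2 (disjoint_gapBefore K y)

theorem one_sub_mul_edDist_le {σ : Fin n → α} {R : Finset (Fin n)} {δ : ℝ}
    (hδ₀ : 0 ≤ δ) (hδ₁ : δ ≤ 1)
    (hR : ∀ j, (∃ k : Fin n, k < j ∧ δ * (((j : ℕ) : ℝ) - ((k : ℕ) : ℝ)) < invCount σ k j) →
      j ∈ R) :
    (1 - δ) * edDist σ ≤ #R := by
  set K := survivors σ R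
  have hRK : R ⊆ Kᶜ := fun j hj => mem_compl.2 fun hjK => (mem_filter.1 hjK).2.1 hj
  have hsplit : (#Kᶜ : ℝ) = #(Kᶜ \ R) + #R := by
    exact_mod_cast (card_sdiff_add_card_eq_card hRK).symm
  have hed : (edDist σ : ℝ) ≤ #Kᶜ :=
    Nat.cast_le.2 (edDist_le_card (by rw [compl_compl]; exact monoOn_survivors σ R))
  have hC := card_compl_survivors_sdiff_le hδ₀ hR
  calc (1 - δ) * edDist σ ≤ (1 - δ) * #Kᶜ := mul_le_mul_of_nonneg_left hed (sub_nonneg.2 hδ₁)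
    _ ≤ #R := by linarith

end

theorem R'_sandwich {n : ℕ} (σ : Fin n → ℕ) (ε' : ℝ) (hε0 : 0 < ε') (hε1 : ε' < 1/4)
    (R' : Finset (Fin n))
    (ha : ∀ j : Fin n, (∃ k : Fin n, k < j ∧
        (1/2 + 2*ε') * (((j : ℕ) : ℝ) - ((k : ℕ) : ℝ)) <
          (((Finset.Ico k j).filter (fun i => σ j < σ i)).card : ℝ)) → j ∈ R')
    (hb : ∀ j ∈ R', ∃ k : Fin n, k < j ∧
        (j : ℕ) - (k : ℕ) <
          2 * ((Finset.Ico k j).filter (fun i => σ j < σ i)).card) :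
    (1/2 - 2*ε') * (edDist σ : ℝ) ≤ (R'.card : ℝ) ∧ R'.card ≤ 2 * edDist σ := by
  constructor
  · have hlower := one_sub_mul_edDist_le (by linarith) (by linarith) ha
    linarith
  · obtain ⟨S, hS, hmono⟩ := exists_card_eq_edDist σ
    exact hS ▸ card_le_two_mul_card_of_monoOn_compl hmono hb
end

section
/- Fix t ≥ 2 and ℓ ≥ 1. Let A_1, ..., A_t ⊆ [ℓ] be sets whose pairwise intersections all equal {y} for a common element y ∈ [ℓ] (uniquely intersecting). Consider items with timestamp (j-1)t + i and value (ℓ-j)t + i for each i ∈ [t], j ∈ A_i, and let V be the value sequence sorted by increasing timestamp. Then lis(V) = t. -/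
/-- Timestamp of the item contributed by player `i` (0-indexed) for element
`j` (0-indexed) : `(j-1)t + i` with 1-indexed `i,j`, i.e. `j₀·t + i₀ + 1`. -/
def tsDisj (t ℓ : ℕ) (p : Fin t × Fin ℓ) : ℕ := (p.2 : ℕ) * t + (p.1 : ℕ) + 1

/-- Value of that item: `(ℓ-j)t + i` with 1-indexed `i,j`. -/
def valDisj (t ℓ : ℕ) (p : Fin t × Fin ℓ) : ℕ := (ℓ - 1 - (p.2 : ℕ)) * t + (p.1 : ℕ) + 1


/-! Sorted by timestamp, two items appear in non-decreasing value order exactly when they belong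
to the same element `j`: within an element both coordinates grow with `i`, while a
later element carries a strictly smaller block of values. So a non-decreasing subsequence uses
each index `i` at most once, and the `t` items of the common element `y` form one. -/

open Finset Function

theorem lisLen_le {n : ℕ} {α : Type*} [Preorder α] {σ : Fin n → α} {m : ℕ}
    (h : ∀ T : Finset (Fin n), MonoOn σ T → T.card ≤ m) : lisLen σ ≤ m :=
  csSup_le' fun _ ⟨T, hcard, hT⟩ => hcard ▸ h T hT

theorem card_le_lisLen {n : ℕ} {α : Type*} [Preorder α] {σ : Fin n → α} {T : Finset (Fin n)}
    (hT : MonoOn σ T) : T.card ≤ lisLen σ := by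
  refine le_csSup ⟨n, ?_⟩ ⟨T, rfl, hT⟩
  rintro _ ⟨T', rfl, -⟩
  simpa using T'.card_le_univ

section Labelled

variable {n : ℕ} {α β γ : Type*} [Preorder α] {σ : Fin n → α} {f : Fin n → β × γ}

theorem card_le_of_monoOn [Fintype β] (hf : Injective f)
    (hσ : ∀ a b, a ≤ b → σ a ≤ σ b → (f a).2 = (f b).2) {T : Finset (Fin n)}
    (hT : MonoOn σ T) : T.card ≤ Fintype.card β := by
  have hfst : Set.InjOn (fun k => (f k).1) T := by
    intro a ha b hb hab
    wlog hle : a ≤ b generalizing a b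
    · exact (this hb ha hab.symm (le_of_not_ge hle)).symm
    exact hf (Prod.ext hab (hσ a b hle (hT a ha b hb hle)))
  simpa using card_le_card_of_injOn _ (fun _ _ => mem_coe.2 (mem_univ _)) hfst

theorem monoOn_filter_snd_eq [DecidableEq γ]
    (hσ : ∀ a b, a ≤ b → (f a).2 = (f b).2 → σ a ≤ σ b) (y : γ) :
    MonoOn σ (univ.filter fun k => (f k).2 = y) := by
  intro a ha b hb hab
  simp only [mem_filter, mem_univ, true_and] at ha hb
  exact hσ a b hab (ha.trans hb.symm)

theorem lisLen_eq_card [Fintype β] (hf : Injective f)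
    (hσ : ∀ a b, a ≤ b → (σ a ≤ σ b ↔ (f a).2 = (f b).2))
    (y : γ) (hy : ∀ i, ∃ k, f k = (i, y)) : lisLen σ = Fintype.card β := by
  classical
  refine le_antisymm (lisLen_le fun T hT => card_le_of_monoOn hf (fun a b h => (hσ a b h).1) hT) ?_
  have hsurj : Set.SurjOn (fun k => (f k).1) (univ.filter fun k => (f k).2 = y)
      (univ : Finset β) := by
    intro i _
    obtain ⟨k, hk⟩ := hy i
    exact ⟨k, by simp [hk], by simp [hk]⟩
  calc Fintype.card β = (univ : Finset β).card := card_univ.symm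
    _ ≤ _ := card_le_card_of_surjOn _ hsurj
    _ ≤ lisLen σ := card_le_lisLen (monoOn_filter_snd_eq (fun a b h => (hσ a b h).2) y)

end Labelled

theorem le_of_mul_add_le_mul_add {t a b i i' : ℕ} (hi' : i' < t) (h : a * t + i ≤ b * t + i') :
    a ≤ b := by
  have ht : 0 < t := by omega
  calc a ≤ (a * t + i) / t := by
        rw [Nat.add_comm, Nat.add_mul_div_right _ _ ht]
        exact Nat.le_add_left _ _
    _ ≤ (b * t + i') / t := Nat.div_le_div_right h
    _ = b := by rw [Nat.add_comm, Nat.add_mul_div_right _ _ ht, Nat.div_eq_of_lt hi', zero_add]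

theorem valDisj_le_iff_snd_eq {t ℓ : ℕ} {p q : Fin t × Fin ℓ}
    (hts : tsDisj t ℓ p ≤ tsDisj t ℓ q) :
    valDisj t ℓ p ≤ valDisj t ℓ q ↔ p.2 = q.2 := by
  unfold tsDisj valDisj at *
  have hp₂ := p.2.isLt
  have hq₁ := q.1.isLt
  constructor
  · intro hval
    have hle : (p.2 : ℕ) ≤ q.2 := le_of_mul_add_le_mul_add (i := p.1) hq₁ (by omega)
    have hge : ℓ - 1 - (p.2 : ℕ) ≤ ℓ - 1 - q.2 :=
      le_of_mul_add_le_mul_add (i := p.1) hq₁ (by omega)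
    exact Fin.ext (by omega)
  · intro h
    rw [h] at hts ⊢
    omega

theorem disj_intersecting_lis_t_general (t ℓ : ℕ)
    (A : Fin t → Finset (Fin ℓ)) (y : Fin ℓ)
    (hy : ∀ i : Fin t, y ∈ A i)
    (S : Finset (Fin t × Fin ℓ))
    (hS : S = Finset.univ.filter (fun p : Fin t × Fin ℓ => p.2 ∈ A p.1))
    (f : Fin S.card → Fin t × Fin ℓ)
    (hf : ∀ k, f k ∈ S)
    (hmono : StrictMono (fun k => tsDisj t ℓ (f k))) :
    lisLen (fun k => valDisj t ℓ (f k)) = t := by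
  have hinj : Injective f := Injective.of_comp (f := tsDisj t ℓ) hmono.injective
  have himage : univ.image f = S :=
    eq_of_subset_of_card_le (image_subset_iff.2 fun k _ => hf k)
      (by rw [card_image_of_injective _ hinj, card_univ, Fintype.card_fin])
  have hfiber : ∀ i, ∃ k, f k = (i, y) := fun i => by
    have hmem : (i, y) ∈ S := by simp [hS, hy i]
    simpa [← himage] using hmem
  simpa using lisLen_eq_card hinj (fun a b hab => valDisj_le_iff_snd_eq (hmono.monotone hab))
    y hfiber

theorem disj_intersecting_lis_t (t ℓ : ℕ) (ht : 2 ≤ t) (hℓ : 1 ≤ ℓ)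
    (A : Fin t → Finset (Fin ℓ)) (y : Fin ℓ)
    (hy : ∀ i : Fin t, y ∈ A i)
    (hint : ∀ i₁ i₂ : Fin t, i₁ ≠ i₂ → A i₁ ∩ A i₂ = {y})
    (S : Finset (Fin t × Fin ℓ))
    (hS : S = Finset.univ.filter (fun p : Fin t × Fin ℓ => p.2 ∈ A p.1))
    (f : Fin S.card → Fin t × Fin ℓ)
    (hf : ∀ k, f k ∈ S) (hinj : Function.Injective f)
    (hmono : StrictMono (fun k => tsDisj t ℓ (f k))) :
    lisLen (fun k => valDisj t ℓ (f k)) = t :=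
  disj_intersecting_lis_t_general t ℓ A y hy S hS f hf hmono
end
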